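/- Let V be a real normed space, s a symmetric positive semi-definite bilinear form on V with seminorm |·|_S, and a : V × V → ℝ bilinear. Assume: (stability) there are c_s > 0, c_η > 0 and for each ξ ∈ V an element v(ξ) with (c_s/2)(‖ξ‖² + |ξ|_S²) ≤ a(ξ, v(ξ)) + s(ξ, v(ξ)) and ‖v(ξ)‖ + |v(ξ)|_S ≤ c_η(‖ξ‖ + |ξ|_S); (orthogonality) a(e, w) + s(e, w) = 0 for all w ∈ V where e = u − u_h and ξ = πu − u_h for some πu ∈ V; (continuity) a(πu − u, w) ≤ c_a N(u − πu)(|w|_S + ‖w‖) for all w ∈ V and some number N(u − πu) ≥ 0. Then ‖ξ‖ + |ξ|_S ≤ (4 c_η (c_a + 1)/c_s) (N(u − πu) + |u − πu|_S). -/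
import Mathlib

lemma cs_aux {V : Type*} [AddCommGroup V] [Module ℝ V]
    (s : V → V → ℝ)
    (hs_left : ∀ w : V, IsLinearMap ℝ (fun u => s u w))
    (hs_right : ∀ u : V, IsLinearMap ℝ (s u))
    (hs_symm : ∀ x y : V, s x y = s y x) (hs_pos : ∀ x : V, 0 ≤ s x x)
    (x y : V) : s x y ≤ Real.sqrt (s x x) * Real.sqrt (s y y) := by
  have h : ∀ t : ℝ, 0 ≤ s y y * (t * t) + (2 * s x y) * t + s x x := by
    intro t
    have e1 : s (x + t • y) (x + t • y) = s x (x + t • y) + t * s y (x + t • y) := by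
      rw [(hs_left (x + t • y)).map_add, (hs_left (x + t • y)).map_smul, smul_eq_mul]
    have e2 : s x (x + t • y) = s x x + t * s x y := by
      rw [(hs_right x).map_add, (hs_right x).map_smul, smul_eq_mul]
    have e3 : s y (x + t • y) = s y x + t * s y y := by
      rw [(hs_right y).map_add, (hs_right y).map_smul, smul_eq_mul]
    have := hs_pos (x + t • y)
    rw [e1, e2, e3, hs_symm y x] at this
    nlinarith [this]
  have hd := discrim_le_zero h
  rw [discrim] at hd
  have hsq : (s x y) ^ 2 ≤ s x x * s y y := by nlinarith
  calc s x y ≤ |s x y| := le_abs_self _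
    _ = Real.sqrt ((s x y) ^ 2) := (Real.sqrt_sq_eq_abs _).symm
    _ ≤ Real.sqrt (s x x * s y y) := Real.sqrt_le_sqrt hsq
    _ = Real.sqrt (s x x) * Real.sqrt (s y y) := Real.sqrt_mul (hs_pos x) _

set_option maxHeartbeats 1600000 in
theorem stmt_7
    {V : Type*} [NormedAddCommGroup V] [NormedSpace ℝ V]
    (a s : V → V → ℝ)
    (ha_left : ∀ w : V, IsLinearMap ℝ (fun u => a u w))
    (ha_right : ∀ u : V, IsLinearMap ℝ (a u))
    (hs_left : ∀ w : V, IsLinearMap ℝ (fun u => s u w))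
    (hs_right : ∀ u : V, IsLinearMap ℝ (s u))
    (hs_symm : ∀ x y : V, s x y = s y x) (hs_pos : ∀ x : V, 0 ≤ s x x)
    (c_s c_η c_a : ℝ) (hcs : 0 < c_s) (hcη : 0 < c_η) (hca : 0 ≤ c_a)
    (v : V → V)
    (hstab : ∀ ξ : V,
      (c_s / 2) * (‖ξ‖ ^ 2 + Real.sqrt (s ξ ξ) ^ 2) ≤ a ξ (v ξ) + s ξ (v ξ))
    (hvbound : ∀ ξ : V,
      ‖v ξ‖ + Real.sqrt (s (v ξ) (v ξ)) ≤ c_η * (‖ξ‖ + Real.sqrt (s ξ ξ)))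
    (u u_h πu : V) (N : ℝ) (hN : 0 ≤ N)
    (horth : ∀ w : V, a (u - u_h) w + s (u - u_h) w = 0)
    (hcont : ∀ w : V, a (πu - u) w ≤ c_a * N * (Real.sqrt (s w w) + ‖w‖)) :
    ‖πu - u_h‖ + Real.sqrt (s (πu - u_h) (πu - u_h))
      ≤ (4 * c_η * (c_a + 1) / c_s) *
        (N + Real.sqrt (s (u - πu) (u - πu))) := by
  set ξ := πu - u_h with hξ
  set w := v ξ with hw
  set e := u - πu with he
  set S := Real.sqrt (s e e) with hS
  set D := ‖ξ‖ + Real.sqrt (s ξ ξ) with hD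
  have hSnn : 0 ≤ S := Real.sqrt_nonneg _
  have hDnn : 0 ≤ D := add_nonneg (norm_nonneg _) (Real.sqrt_nonneg _)
  -- split ξ = (πu - u) + (u - u_h)
  have hsplit : ξ = (πu - u) + (u - u_h) := by rw [hξ]; abel
  have hsplita : a ξ w = a (πu - u) w + a (u - u_h) w := by
    rw [hsplit]; exact (ha_left w).map_add _ _
  have hsplits : s ξ w = s (πu - u) w + s (u - u_h) w := by
    rw [hsplit]; exact (hs_left w).map_add _ _
  -- s (πu - u) w = - s e w
  have hneg : s (πu - u) w = - s e w := by
    have : πu - u = -e := by rw [he]; abel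
    rw [this]
    have := (hs_left w).map_smul (-1 : ℝ) e
    simpa using this
  -- Cauchy-Schwarz
  have hcs2 : - s e w ≤ S * Real.sqrt (s w w) := by
    have h1 : s (-e) w ≤ Real.sqrt (s (-e) (-e)) * Real.sqrt (s w w) :=
      cs_aux s hs_left hs_right hs_symm hs_pos (-e) w
    have h2 : s (-e) w = - s e w := by
      have := (hs_left w).map_smul (-1 : ℝ) e
      simpa using this
    have h3 : s (-e) (-e) = s e e := by
      have hl := (hs_left (-e)).map_smul (-1 : ℝ) e
      have hr := (hs_right e).map_smul (-1 : ℝ) e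
      simp only [neg_one_smul, smul_eq_mul] at hl hr
      simp at hl hr ⊢
      linarith
    rw [h2, h3] at h1
    exact h1
  have hww : 0 ≤ Real.sqrt (s w w) := Real.sqrt_nonneg _
  -- main chain
  have hmain : (c_s / 2) * (‖ξ‖ ^ 2 + Real.sqrt (s ξ ξ) ^ 2)
      ≤ (c_a * N + S) * (Real.sqrt (s w w) + ‖w‖) := by
    have h0 := hstab ξ
    have h1 : a ξ w + s ξ w = a (πu - u) w + s (πu - u) w := by
      rw [hsplita, hsplits]
      have := horth w
      linarith
    have h2 : a (πu - u) w ≤ c_a * N * (Real.sqrt (s w w) + ‖w‖) := hcont w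
    have h3 : s (πu - u) w ≤ S * (Real.sqrt (s w w) + ‖w‖) := by
      rw [hneg]
      have : S * Real.sqrt (s w w) ≤ S * (Real.sqrt (s w w) + ‖w‖) := by
        nlinarith [norm_nonneg w]
      linarith
    calc (c_s / 2) * (‖ξ‖ ^ 2 + Real.sqrt (s ξ ξ) ^ 2) ≤ a ξ w + s ξ w := h0
      _ = a (πu - u) w + s (πu - u) w := h1
      _ ≤ c_a * N * (Real.sqrt (s w w) + ‖w‖) + S * (Real.sqrt (s w w) + ‖w‖) := by
          linarith
      _ = (c_a * N + S) * (Real.sqrt (s w w) + ‖w‖) := by ring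
  have hvb : Real.sqrt (s w w) + ‖w‖ ≤ c_η * D := by
    have := hvbound ξ
    rw [← hD] at this
    linarith
  have hMnn : 0 ≤ c_a * N + S := add_nonneg (mul_nonneg hca hN) hSnn
  have hkey : (c_s / 4) * D ^ 2 ≤ (c_a * N + S) * (c_η * D) := by
    have hsq : D ^ 2 ≤ 2 * (‖ξ‖ ^ 2 + Real.sqrt (s ξ ξ) ^ 2) := by
      rw [hD]; nlinarith [sq_nonneg (‖ξ‖ - Real.sqrt (s ξ ξ))]
    have h4 : (c_a * N + S) * (Real.sqrt (s w w) + ‖w‖) ≤ (c_a * N + S) * (c_η * D) :=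
      mul_le_mul_of_nonneg_left hvb hMnn
    have h5 : (c_s / 4) * D ^ 2 ≤ (c_s / 2) * (‖ξ‖ ^ 2 + Real.sqrt (s ξ ξ) ^ 2) := by
      nlinarith [mul_le_mul_of_nonneg_left hsq (by positivity : (0:ℝ) ≤ c_s / 4)]
    exact le_trans (le_trans h5 hmain) h4
  clear_value D S e w ξ
  rcases eq_or_lt_of_le hDnn with hD0 | hD0
  · have hrhs : 0 ≤ (4 * c_η * (c_a + 1) / c_s) * (N + S) := by positivity
    linarith
  · rw [div_mul_eq_mul_div, le_div_iff₀ hcs]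
    have hcsD : c_s * D ≤ 4 * c_η * (c_a * N + S) := by
      rcases le_or_gt (c_s * D) (4 * c_η * (c_a * N + S)) with h | h
      · exact h
      · exfalso
        have h8 := mul_lt_mul_of_pos_right h hD0
        nlinarith [hkey, h8]
    have h6 : c_a * N + S ≤ (c_a + 1) * (N + S) := by nlinarith [mul_nonneg hca hSnn]
    have h7 : 4 * c_η * (c_a * N + S) ≤ 4 * c_η * ((c_a + 1) * (N + S)) :=
      mul_le_mul_of_nonneg_left h6 (by positivity)
    nlinarith [hcsD, h7]
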